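/- arXiv:2412.14198 — 6 statements merged into one kernel-verified Lean document; each statement's English description precedes it below -/
import Mathlib

section
/- Let G be a finite simple graph with positive real vertex weights ω, and let u, v be adjacent vertices of G such that N[u] ⊆ N[v] and ω(v) > ω(u). Let G' be the graph obtained from G by deleting the edge {u,v}, and let ω' agree with ω except ω'(v) = ω(v) − ω(u). Then α_{ω'}(G') = α_ω(G). -/
open scoped Classical

/-- `S` is an independent set of vertices in `G`: no two members are adjacent. -/
def IsIndepSet {V : Type*} (G : SimpleGraph V) (S : Finset V) : Prop :=
  ∀ a ∈ S, ∀ b ∈ S, ¬ G.Adj a b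

/-- The maximum total `w`-weight of an independent set of `G` contained in `A`
(the weighted independence number of the subgraph of `G` induced on `A`). -/
noncomputable def alphaOn {V : Type*} [Fintype V] (G : SimpleGraph V) (w : V → ℝ)
    (A : Set V) : ℝ :=
  sSup {x : ℝ | ∃ S : Finset V, ↑S ⊆ A ∧ IsIndepSet G S ∧ x = ∑ v ∈ S, w v}

/-- The maximum total `w`-weight of an independent set of `G`. -/
noncomputable def alpha {V : Type*} [Fintype V] (G : SimpleGraph V) (w : V → ℝ) : ℝ :=
  alphaOn G w Set.univ

/-- `S` is a maximum `w`-weight independent set of `G`. -/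
def IsMWIS {V : Type*} [Fintype V] (G : SimpleGraph V) (w : V → ℝ) (S : Finset V) : Prop :=
  IsIndepSet G S ∧ ∑ v ∈ S, w v = alpha G w

/-- The closed neighborhood `N[v]` of a vertex. -/
def closedNbhd {V : Type*} (G : SimpleGraph V) (v : V) : Set V :=
  insert v (G.neighborSet v)

/-- The open neighborhood `N(S)` of a set of vertices. -/
def setNbhd {V : Type*} (G : SimpleGraph V) (S : Set V) : Set V :=
  (⋃ s ∈ S, G.neighborSet s) \ S

/-- The closed neighborhood `N[S]` of a set of vertices. -/
def closedSetNbhd {V : Type*} (G : SimpleGraph V) (S : Set V) : Set V :=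
  setNbhd G S ∪ S

/-! Write `G' = G - uv` and `ω'` for the modified weights. An independent set `S ∋ v` of `G`
misses `u`, and `S ∪ {u}` is independent in `G'` because `N(u) \ {v} ⊆ N(v)`; its
`ω'`-weight is `ω(S)`. Conversely, if `T ∋ v` is independent in `G'`, then `T \ {u}` is
independent in `G` and its `ω`-weight is `ω'(T ∪ {u}) ≥ ω'(T)`. Independent sets avoiding `v`
are the same in both graphs and have the same weight. -/

section IndepSet

variable {V : Type*}

lemma IsIndepSet.anti {G H : SimpleGraph V} {S : Finset V} (hGH : H ≤ G)
    (hS : IsIndepSet G S) : IsIndepSet H S :=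
  fun a ha b hb hab => hS a ha b hb (hGH hab)

lemma IsIndepSet.subset {G : SimpleGraph V} {S T : Finset V} (hST : S ⊆ T)
    (hT : IsIndepSet G T) : IsIndepSet G S :=
  fun a ha b hb => hT a (hST ha) b (hST hb)

lemma isIndepSet_insert {G : SimpleGraph V} {S : Finset V} {a : V} :
    IsIndepSet G (insert a S) ↔ IsIndepSet G S ∧ ∀ b ∈ S, ¬ G.Adj a b := by
  refine ⟨fun h => ⟨h.subset (Finset.subset_insert a S), fun b hb =>
    h a (Finset.mem_insert_self a S) b (Finset.mem_insert_of_mem hb)⟩, ?_⟩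
  rintro ⟨hS, ha⟩ x hx y hy hxy
  rcases Finset.mem_insert.mp hx with rfl | hxS
  · rcases Finset.mem_insert.mp hy with rfl | hyS
    · exact hxy.ne rfl
    · exact ha y hyS hxy
  · rcases Finset.mem_insert.mp hy with rfl | hyS
    · exact ha x hxS hxy.symm
    · exact hS x hxS y hyS hxy

lemma IsIndepSet.of_deleteEdges {G : SimpleGraph V} {S : Finset V} {u v : V}
    (hS : IsIndepSet (G.deleteEdges {s(u, v)}) S) (huv : u ∉ S ∨ v ∉ S) : IsIndepSet G S := by
  intro a ha b hb hab
  refine hS a ha b hb (SimpleGraph.deleteEdges_adj.mpr ⟨hab, ?_⟩)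
  simp only [Set.mem_singleton_iff, Sym2.eq_iff]
  rintro (⟨rfl, rfl⟩ | ⟨rfl, rfl⟩) <;> tauto

lemma IsIndepSet.insert_of_closedNbhd_subset {G : SimpleGraph V} {S : Finset V} {u v : V}
    (hsub : closedNbhd G u ⊆ closedNbhd G v) (hS : IsIndepSet (G.deleteEdges {s(u, v)}) S)
    (hv : v ∈ S) : IsIndepSet (G.deleteEdges {s(u, v)}) (insert u S) := by
  refine isIndepSet_insert.mpr ⟨hS, fun b hb hub => ?_⟩
  obtain ⟨hub, hbv⟩ := SimpleGraph.deleteEdges_adj.mp hub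
  have hbv : b ≠ v := by rintro rfl; exact hbv rfl
  have hvb : G.Adj v b :=
    (Set.mem_insert_iff.mp (hsub (Set.mem_insert_of_mem u hub))).resolve_left hbv
  refine hS v hv b hb (SimpleGraph.deleteEdges_adj.mpr ⟨hvb, ?_⟩)
  simp only [Set.mem_singleton_iff, Sym2.eq_iff]
  rintro (⟨-, rfl⟩ | ⟨-, rfl⟩)
  · exact hbv rfl
  · exact hub.ne rfl

end IndepSet

section Alpha

variable {V : Type*} [Fintype V] {G : SimpleGraph V} {w : V → ℝ}

lemma sum_le_alpha {S : Finset V} (hS : IsIndepSet G S) : ∑ x ∈ S, w x ≤ alpha G w := by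
  refine le_csSup ?_ ⟨S, Set.subset_univ _, hS, rfl⟩
  refine (Set.finite_range fun T : Finset V => ∑ x ∈ T, w x).subset ?_ |>.bddAbove
  rintro _ ⟨T, -, -, rfl⟩
  exact ⟨T, rfl⟩

lemma alpha_le {c : ℝ} (h : ∀ S, IsIndepSet G S → ∑ x ∈ S, w x ≤ c) : alpha G w ≤ c :=
  csSup_le ⟨0, ∅, by simp, fun a ha => by simp at ha, by simp⟩
    fun _ ⟨S, _, hS, hx⟩ => hx ▸ h S hS

end Alpha

lemma Finset.sum_insert_update_sub {V M : Type*} [DecidableEq V] [AddCommGroup M]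
    {S : Finset V} {u v : V} (w : V → M) (huv : u ≠ v) (hu : u ∉ S) (hv : v ∈ S) :
    ∑ x ∈ insert u S, Function.update w v (w v - w u) x = ∑ x ∈ S, w x := by
  rw [Finset.sum_insert hu, Function.update_of_ne huv, Finset.sum_update_of_mem hv,
    ← Finset.add_sum_erase S w hv, Finset.sdiff_singleton_eq_erase]
  abel

theorem stmt_0_general {V : Type*} [Fintype V] (G : SimpleGraph V) (w : V → ℝ)
    (hw : ∀ x, 0 < w x) (u v : V) (hadj : G.Adj u v)
    (hsub : closedNbhd G u ⊆ closedNbhd G v) :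
    alpha (G.deleteEdges {s(u, v)}) (Function.update w v (w v - w u)) = alpha G w := by
  set w' := Function.update w v (w v - w u)
  refine le_antisymm (alpha_le fun T hT => ?_) (alpha_le fun S hS => ?_)
  · by_cases hvT : v ∈ T
    · have hvT' : v ∈ T.erase u := Finset.mem_erase.mpr ⟨hadj.ne.symm, hvT⟩
      calc ∑ x ∈ T, w' x ≤ ∑ x ∈ insert u (T.erase u), w' x := by
            refine Finset.sum_le_sum_of_subset_of_nonneg (Finset.insert_erase_subset u T)
              fun x hx hxT => ?_
            obtain rfl : x = u := by simpa [hxT] using hx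
            simpa [w', hadj.ne] using (hw x).le
        _ = ∑ x ∈ T.erase u, w x :=
            Finset.sum_insert_update_sub w hadj.ne (Finset.notMem_erase u T) hvT'
        _ ≤ alpha G w := sum_le_alpha <| (hT.subset (Finset.erase_subset u T)).of_deleteEdges
            (Or.inl (Finset.notMem_erase u T))
    · rw [Finset.sum_update_of_notMem hvT]
      exact sum_le_alpha (hT.of_deleteEdges (Or.inr hvT))
  · have hS' := hS.anti (G.deleteEdges_le {s(u, v)})
    by_cases hvS : v ∈ S
    · have huS : u ∉ S := fun huS => hS u huS v hvS hadj
      rw [← Finset.sum_insert_update_sub w hadj.ne huS hvS]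
      exact sum_le_alpha (hS'.insert_of_closedNbhd_subset hsub hvS)
    · rw [← Finset.sum_update_of_notMem hvS w (w v - w u)]
      exact sum_le_alpha hS'

theorem stmt_0 {V : Type*} [Fintype V] (G : SimpleGraph V) (w : V → ℝ)
    (hw : ∀ x, 0 < w x) (u v : V) (hadj : G.Adj u v)
    (hsub : closedNbhd G u ⊆ closedNbhd G v) (hlt : w u < w v) :
    alpha (G.deleteEdges {s(u, v)}) (Function.update w v (w v - w u)) = alpha G w :=
  stmt_0_general G w hw u v hadj hsub
end

section
/- Let G be a finite simple graph with positive real vertex weights ω, and let u, v be adjacent vertices of G such that N[u] ⊆ N[v] and ω(v) > ω(u). Let G' be obtained from G by deleting the edge {u,v}, with weights ω' equal to ω except ω'(v) = ω(v) − ω(u). If I' is a maximum ω'-weight independent set of G' with u ∈ I' and v ∈ I', then I' \ {u} is a maximum ω-weight independent set of G. -/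
open scoped Classical

lemma alphaSet_finite {V : Type*} [Fintype V] (G : SimpleGraph V) (w : V → ℝ) (A : Set V) :
    {x : ℝ | ∃ S : Finset V, ↑S ⊆ A ∧ IsIndepSet G S ∧ x = ∑ v ∈ S, w v}.Finite := by
  apply (Set.finite_range (fun S : Finset V => ∑ v ∈ S, w v)).subset
  rintro x ⟨S, -, -, rfl⟩
  exact ⟨S, rfl⟩

theorem stmt_1 {V : Type*} [Fintype V] (G : SimpleGraph V) (w : V → ℝ)
    (hw : ∀ x, 0 < w x) (u v : V) (hadj : G.Adj u v)
    (hsub : closedNbhd G u ⊆ closedNbhd G v) (hlt : w u < w v)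
    (I' : Finset V)
    (hI' : IsMWIS (G.deleteEdges {s(u, v)}) (Function.update w v (w v - w u)) I')
    (huI : u ∈ I') (hvI : v ∈ I') :
    IsMWIS G w (I'.erase u) := by
  classical
  set G' := G.deleteEdges {s(u, v)} with hG'
  set w' : V → ℝ := Function.update w v (w v - w u) with hw'
  have hne : u ≠ v := hadj.ne
  obtain ⟨hind', hsum'⟩ := hI'
  -- adjacency in G'
  have hadj' : ∀ a b, G'.Adj a b ↔ G.Adj a b ∧ ¬(a = u ∧ b = v) ∧ ¬(a = v ∧ b = u) := by
    intro a b
    rw [hG', SimpleGraph.deleteEdges_adj]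
    simp [Sym2.eq_iff, and_assoc, not_or]
  -- key sum identities
  have hsum_w' : ∀ S : Finset V, v ∈ S → ∑ x ∈ S, w' x = (∑ x ∈ S, w x) - w u := by
    intro S hvS
    rw [hw', Finset.sum_update_of_mem hvS, ← Finset.sum_erase_add S w hvS,
      Finset.sdiff_singleton_eq_erase]
    ring
  have hEq : ∑ x ∈ I'.erase u, w x = ∑ x ∈ I', w' x := by
    rw [hsum_w' I' hvI, ← Finset.sum_erase_add I' w huI]
    ring
  -- independence of I'.erase u in G
  have hindep : IsIndepSet G (I'.erase u) := by
    intro a ha b hb hab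
    have ha' := Finset.mem_erase.1 ha
    have hb' := Finset.mem_erase.1 hb
    refine hind' a ha'.2 b hb'.2 ?_
    rw [hadj' a b]
    exact ⟨hab, fun h => ha'.1 h.1, fun h => hb'.1 h.2⟩
  -- the target value is in the alpha-set for G
  have hmem : (∑ x ∈ I'.erase u, w x) ∈
      {x : ℝ | ∃ S : Finset V, ↑S ⊆ (Set.univ : Set V) ∧ IsIndepSet G S ∧ x = ∑ v ∈ S, w v} :=
    ⟨I'.erase u, Set.subset_univ _, hindep, rfl⟩
  have hbdd := (alphaSet_finite G w (Set.univ : Set V)).bddAbove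
  have hbdd' := (alphaSet_finite G' w' (Set.univ : Set V)).bddAbove
  -- upper bound: every independent set of G has weight ≤ alpha G' w'
  have hub : ∀ x ∈ {x : ℝ | ∃ S : Finset V, ↑S ⊆ (Set.univ : Set V) ∧ IsIndepSet G S ∧
      x = ∑ v ∈ S, w v}, x ≤ ∑ x ∈ I'.erase u, w x := by
    rintro x ⟨S, -, hS, rfl⟩
    rw [hEq, hsum']
    by_cases hvS : v ∈ S
    · -- insert u into S
      have huS : u ∉ S := fun huS => hS u huS v hvS hadj
      have key : ∀ b ∈ S, ¬ G'.Adj u b := by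
        intro b hb hab
        rw [hadj' u b] at hab
        obtain ⟨hub, h1, _⟩ := hab
        have hbv : b ≠ v := fun h => h1 ⟨rfl, h⟩
        have hcl : b ∈ closedNbhd G v := hsub (Set.mem_insert_of_mem _ hub)
        rcases hcl with h | h
        · exact hbv h
        · exact hS v hvS b hb h
      have hTind : IsIndepSet G' (insert u S) := by
        intro a ha b hb hab
        rcases Finset.mem_insert.1 ha with ha | ha
        · rcases Finset.mem_insert.1 hb with hb | hb
          · exact hab.ne (ha.trans hb.symm)
          · exact key b hb (ha ▸ hab)
        · rcases Finset.mem_insert.1 hb with hb | hb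
          · exact key a ha (hb ▸ hab.symm)
          · rw [hadj' a b] at hab
            exact hS a ha b hb hab.1
      have hval : ∑ x ∈ S, w x = ∑ x ∈ insert u S, w' x := by
        rw [Finset.sum_insert huS, hsum_w' S hvS, hw', Function.update_of_ne hne]
        ring
      rw [hval]
      exact le_csSup hbdd' ⟨insert u S, Set.subset_univ _, hTind, rfl⟩
    · -- S itself works in G'
      have hSind : IsIndepSet G' S := by
        intro a ha b hb hab
        rw [hadj' a b] at hab
        exact hS a ha b hb hab.1
      have hval : ∑ x ∈ S, w x = ∑ x ∈ S, w' x := by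
        refine Finset.sum_congr rfl fun x hx => ?_
        rw [hw', Function.update_of_ne (fun h => hvS (by rw [← h]; exact hx))]
      rw [hval]
      exact le_csSup hbdd' ⟨S, Set.subset_univ _, hSind, rfl⟩
  refine ⟨hindep, le_antisymm (le_csSup hbdd hmem) (csSup_le ⟨_, hmem⟩ hub)⟩
end

section
/- Let G be a finite simple graph with positive real vertex weights ω, and let u, v be adjacent vertices of G such that N[u] ⊆ N[v] and ω(v) > ω(u). Let G' be obtained from G by deleting the edge {u,v}, with weights ω' equal to ω except ω'(v) = ω(v) − ω(u). If I' is a maximum ω'-weight independent set of G' with v ∉ I', then I' is a maximum ω-weight independent set of G. -/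
open scoped Classical

def indepSums {V : Type*} [Fintype V] (G : SimpleGraph V) (w : V → ℝ) : Set ℝ :=
  {x : ℝ | ∃ S : Finset V, ↑S ⊆ (Set.univ : Set V) ∧ IsIndepSet G S ∧ x = ∑ v ∈ S, w v}

lemma alpha_eq {V : Type*} [Fintype V] (G : SimpleGraph V) (w : V → ℝ) :
    alpha G w = sSup (indepSums G w) := rfl

lemma bdd {V : Type*} [Fintype V] (G : SimpleGraph V) (w : V → ℝ) :
    BddAbove (indepSums G w) := by
  apply Set.Finite.bddAbove
  apply Set.Finite.subset (Set.finite_range fun S : Finset V => ∑ v ∈ S, w v)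
  rintro x ⟨S, -, -, rfl⟩; exact ⟨S, rfl⟩

lemma mem_indepSums {V : Type*} [Fintype V] (G : SimpleGraph V) (w : V → ℝ) {S : Finset V}
    (h : IsIndepSet G S) : (∑ v ∈ S, w v) ∈ indepSums G w :=
  ⟨S, by simp, h, rfl⟩

lemma ne_indepSums {V : Type*} [Fintype V] (G : SimpleGraph V) (w : V → ℝ) :
    (indepSums G w).Nonempty :=
  ⟨0, ∅, by simp, fun a ha => absurd ha (Finset.notMem_empty a), by simp⟩

theorem stmt_2 {V : Type*} [Fintype V] (G : SimpleGraph V) (w : V → ℝ)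
    (hw : ∀ x, 0 < w x) (u v : V) (hadj : G.Adj u v)
    (hsub : closedNbhd G u ⊆ closedNbhd G v) (hlt : w u < w v)
    (I' : Finset V)
    (hI' : IsMWIS (G.deleteEdges {s(u, v)}) (Function.update w v (w v - w u)) I')
    (hvI : v ∉ I') :
    IsMWIS G w I' := by
  set w' : V → ℝ := Function.update w v (w v - w u) with hw'
  set G' := G.deleteEdges {s(u, v)} with hG'
  obtain ⟨hind', hsum'⟩ := hI'
  have huv : u ≠ v := G.ne_of_adj hadj
  -- I' is independent in G
  have hindG : IsIndepSet G I' := by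
    intro a ha b hb hab
    refine hind' a ha b hb ?_
    rw [hG', SimpleGraph.deleteEdges_adj]
    refine ⟨hab, ?_⟩
    intro h
    rw [Set.mem_singleton_iff, Sym2.eq_iff] at h
    rcases h with ⟨-, rfl⟩ | ⟨rfl, -⟩
    · exact hvI hb
    · exact hvI ha
  -- w' agrees with w on I'
  have hsumI : ∑ x ∈ I', w' x = ∑ x ∈ I', w x := by
    refine Finset.sum_congr rfl fun x hx => ?_
    have : x ≠ v := fun h => hvI (h ▸ hx)
    simp [hw', Function.update_of_ne this]
  -- key: any independent set of G has w-weight ≤ alpha G' w'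
  have hkey : ∀ S : Finset V, IsIndepSet G S → ∑ x ∈ S, w x ≤ alpha G' w' := by
    intro S hS
    by_cases hvS : v ∈ S
    · -- insert u S is independent in G'
      have huS : u ∉ S := fun h => hS u h v hvS hadj
      have hindT : IsIndepSet G' (insert u S) := by
        intro a ha b hb hab
        rw [hG', SimpleGraph.deleteEdges_adj] at hab
        obtain ⟨hab1, hab2⟩ := hab
        have aux : ∀ c ∈ S, ¬ (G.Adj u c ∧ s(u, c) ∉ ({s(u, v)} : Set (Sym2 V))) := by
          intro c hc ⟨h1, h2⟩
          have hcv : c ≠ v := by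
            rintro rfl; exact h2 rfl
          have : c ∈ closedNbhd G v := hsub (Set.mem_insert_of_mem _ h1)
          rcases this with h | h
          · exact hcv h
          · exact hS v hvS c hc h
        rcases Finset.mem_insert.mp ha with rfl | ha'
        · rcases Finset.mem_insert.mp hb with rfl | hb'
          · exact G.irrefl hab1
          · exact aux b hb' ⟨hab1, hab2⟩
        · rcases Finset.mem_insert.mp hb with rfl | hb'
          · refine aux a ha' ⟨hab1.symm, fun h => hab2 ?_⟩
            rw [Set.mem_singleton_iff] at h ⊢
            rw [Sym2.eq_swap]; exact h
          · exact hS a ha' b hb' hab1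
      have hsumT : ∑ x ∈ insert u S, w' x = ∑ x ∈ S, w x := by
        rw [Finset.sum_insert huS]
        rw [← Finset.add_sum_erase S w' hvS, ← Finset.add_sum_erase S w hvS]
        have h1 : w' u = w u := Function.update_of_ne huv _ _
        have h2 : w' v = w v - w u := Function.update_self _ _ _
        have h3 : ∑ x ∈ S.erase v, w' x = ∑ x ∈ S.erase v, w x := by
          refine Finset.sum_congr rfl fun x hx => ?_
          exact Function.update_of_ne (Finset.ne_of_mem_erase hx) _ _
        rw [h1, h2, h3]; ring
      calc ∑ x ∈ S, w x = ∑ x ∈ insert u S, w' x := hsumT.symm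
        _ ≤ alpha G' w' := by
            rw [alpha_eq]
            exact le_csSup (bdd G' w') (mem_indepSums G' w' hindT)
    · -- S is independent in G'
      have hindS' : IsIndepSet G' S := fun a ha b hb hab =>
        hS a ha b hb ((SimpleGraph.deleteEdges_adj).mp hab).1
      have : ∑ x ∈ S, w' x = ∑ x ∈ S, w x := by
        refine Finset.sum_congr rfl fun x hx => ?_
        exact Function.update_of_ne (by rintro rfl; exact hvS hx) _ _
      rw [← this, alpha_eq]
      exact le_csSup (bdd G' w') (mem_indepSums G' w' hindS')
  refine ⟨hindG, le_antisymm ?_ ?_⟩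
  · rw [alpha_eq]
    exact le_csSup (bdd G w) (mem_indepSums G w hindG)
  · rw [alpha_eq]
    refine csSup_le (ne_indepSums G w) ?_
    rintro x ⟨S, -, hS, rfl⟩
    calc ∑ x ∈ S, w x ≤ alpha G' w' := hkey S hS
      _ = ∑ x ∈ I', w' x := hsum'.symm
      _ = ∑ x ∈ I', w x := hsumI
end

section
/- Let G be a finite simple graph with positive real vertex weights ω, and let u, v be non-adjacent vertices of G such that N(u) ⊆ N(v). If ω(u) + ω(v) ≥ ω(N(v)), then some maximum ω-weight independent set of G contains u, and α_ω(G) = α_ω(G − N[u]) + ω(u). -/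
open scoped Classical

lemma alphaOn_spec {V : Type*} [Fintype V] (G : SimpleGraph V) (w : V → ℝ) (A : Set V) :
    (∃ S : Finset V, ↑S ⊆ A ∧ IsIndepSet G S ∧ alphaOn G w A = ∑ v ∈ S, w v) ∧
    ∀ S : Finset V, ↑S ⊆ A → IsIndepSet G S → ∑ v ∈ S, w v ≤ alphaOn G w A := by
  set E := {x : ℝ | ∃ S : Finset V, ↑S ⊆ A ∧ IsIndepSet G S ∧ x = ∑ v ∈ S, w v} with hE
  have hfin : E.Finite := by
    apply Set.Finite.subset (Set.finite_range (fun S : Finset V => ∑ v ∈ S, w v))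
    rintro x ⟨S, -, -, rfl⟩
    exact ⟨S, rfl⟩
  have hne : E.Nonempty := ⟨0, ∅, by simp, by intro a ha; simp at ha, by simp⟩
  have hmem : sSup E ∈ E := hne.csSup_mem hfin
  constructor
  · obtain ⟨S, h1, h2, h3⟩ := hmem
    exact ⟨S, h1, h2, h3⟩
  · intro S h1 h2
    exact le_csSup hfin.bddAbove ⟨S, h1, h2, rfl⟩

theorem stmt_8 {V : Type*} [Fintype V] (G : SimpleGraph V) (w : V → ℝ)
    (hw : ∀ x, 0 < w x) (u v : V) (hne : u ≠ v) (hnadj : ¬ G.Adj u v)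
    (hsub : G.neighborSet u ⊆ G.neighborSet v)
    (hwt : (∑ x ∈ Finset.univ.filter (fun x => G.Adj v x), w x) ≤ w u + w v) :
    (∃ S : Finset V, IsMWIS G w S ∧ u ∈ S) ∧
      alpha G w = alphaOn G w (closedNbhd G u)ᶜ + w u := by
  classical
  have hadj : ∀ s, G.Adj u s → G.Adj v s := fun s h =>
    (SimpleGraph.mem_neighborSet G v s).mp (hsub ((SimpleGraph.mem_neighborSet G u s).mpr h))
  set Nv : Finset V := Finset.univ.filter (fun x => G.Adj v x) with hNvdef
  have hNvmem : ∀ x, x ∈ Nv ↔ G.Adj v x := by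
    intro x; simp [hNvdef]
  obtain ⟨⟨S, hSA, hSind, hSsum⟩, hub⟩ := alphaOn_spec G w Set.univ
  have halpha : alpha G w = ∑ x ∈ S, w x := hSsum
  have key : ∃ S : Finset V, IsMWIS G w S ∧ u ∈ S := by
    by_cases hu : u ∈ S
    · exact ⟨S, ⟨hSind, hSsum.symm⟩, hu⟩
    by_cases hv : v ∈ S
    · exfalso
      have hind : IsIndepSet G (insert u S) := by
        intro a ha b hb hab
        rcases Finset.mem_insert.mp ha with ha' | ha <;>
          rcases Finset.mem_insert.mp hb with hb' | hb
        · exact G.irrefl (ha' ▸ hb' ▸ hab)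
        · exact hSind v hv b hb (hadj b (ha' ▸ hab))
        · exact hSind v hv a ha (hadj a (hb' ▸ hab).symm)
        · exact hSind a ha b hb hab
      have h1 := hub (insert u S) (by simp) hind
      rw [Finset.sum_insert hu] at h1
      rw [hSsum] at h1
      have := hw u
      linarith
    · set S' : Finset V := insert u (insert v (S \ Nv)) with hS'def
      have hvnot : v ∉ S \ Nv := fun h => hv (Finset.mem_sdiff.mp h).1
      have hunot : u ∉ insert v (S \ Nv) := by
        intro h
        rcases Finset.mem_insert.mp h with rfl | h
        · exact hne rfl
        · exact hu (Finset.mem_sdiff.mp h).1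
      have hind : IsIndepSet G S' := by
        intro a ha b hb hab
        have hcase : ∀ x, x ∈ S' → x = u ∨ x = v ∨ (x ∈ S ∧ x ∉ Nv) := by
          intro x hx
          rcases Finset.mem_insert.mp hx with rfl | hx
          · exact Or.inl rfl
          rcases Finset.mem_insert.mp hx with rfl | hx
          · exact Or.inr (Or.inl rfl)
          · exact Or.inr (Or.inr (Finset.mem_sdiff.mp hx))
        rcases hcase a ha with ha' | ha' | ⟨haS, haN⟩ <;>
          rcases hcase b hb with hb' | hb' | ⟨hbS, hbN⟩
        · exact G.irrefl (ha' ▸ hb' ▸ hab)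
        · exact hnadj (ha' ▸ hb' ▸ hab)
        · exact hbN ((hNvmem b).mpr (hadj b (ha' ▸ hab)))
        · exact hnadj (hb' ▸ ha' ▸ hab).symm
        · exact G.irrefl (ha' ▸ hb' ▸ hab)
        · exact hbN ((hNvmem b).mpr (ha' ▸ hab))
        · exact haN ((hNvmem a).mpr (hadj a (hb' ▸ hab).symm))
        · exact haN ((hNvmem a).mpr (hb' ▸ hab).symm)
        · exact hSind a haS b hbS hab
      have hsum : ∑ x ∈ S', w x = w u + w v + ∑ x ∈ S \ Nv, w x := by
        rw [hS'def, Finset.sum_insert hunot, Finset.sum_insert hvnot]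
        ring
      have hpart : ∑ x ∈ S ∩ Nv, w x + ∑ x ∈ S \ Nv, w x = ∑ x ∈ S, w x :=
        Finset.sum_inter_add_sum_sdiff S Nv w
      have hle : ∑ x ∈ S ∩ Nv, w x ≤ ∑ x ∈ Nv, w x :=
        Finset.sum_le_sum_of_subset_of_nonneg Finset.inter_subset_right
          (fun i _ _ => (hw i).le)
      have h1 := hub S' (by simp) hind
      rw [hSsum] at h1
      have h2 : ∑ x ∈ S, w x ≤ ∑ x ∈ S', w x := by
        rw [hsum]; linarith
      refine ⟨S', ⟨hind, ?_⟩, Finset.mem_insert_self u _⟩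
      rw [halpha]
      linarith
  obtain ⟨M, ⟨hMind, hMsum⟩, huM⟩ := key
  refine ⟨⟨M, ⟨hMind, hMsum⟩, huM⟩, ?_⟩
  obtain ⟨⟨T, hTA, hTind, hTsum⟩, hub'⟩ := alphaOn_spec G w (closedNbhd G u)ᶜ
  have huc : u ∈ closedNbhd G u := Set.mem_insert u _
  -- ≥ : erase u from M
  have hEsub : ↑(M.erase u) ⊆ (closedNbhd G u)ᶜ := by
    intro x hx
    simp only [Finset.coe_erase, Set.mem_diff, Finset.mem_coe, Set.mem_singleton_iff] at hx
    obtain ⟨hxM, hxu⟩ := hx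
    intro hxc
    rcases hxc with rfl | hxc
    · exact hxu rfl
    · exact hMind u huM x hxM hxc
  have hEind : IsIndepSet G (M.erase u) := fun a ha b hb =>
    hMind a (Finset.mem_of_mem_erase ha) b (Finset.mem_of_mem_erase hb)
  have hEsum : ∑ x ∈ M.erase u, w x + w u = ∑ x ∈ M, w x :=
    Finset.sum_erase_add M w huM
  have hle1 : alpha G w ≤ alphaOn G w (closedNbhd G u)ᶜ + w u := by
    have := hub' (M.erase u) hEsub hEind
    rw [← hMsum, ← hEsum]
    linarith
  -- ≤ : insert u into T
  have huT : u ∉ T := fun h => (hTA h) huc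
  have hIind : IsIndepSet G (insert u T) := by
    intro a ha b hb hab
    rcases Finset.mem_insert.mp ha with ha' | ha <;>
      rcases Finset.mem_insert.mp hb with hb' | hb
    · exact G.irrefl (ha' ▸ hb' ▸ hab)
    · exact (hTA hb) (Set.mem_insert_iff.mpr (Or.inr (ha' ▸ hab)))
    · exact (hTA ha) (Set.mem_insert_iff.mpr (Or.inr (hb' ▸ hab).symm))
    · exact hTind a ha b hb hab
  have hle2 : alphaOn G w (closedNbhd G u)ᶜ + w u ≤ alpha G w := by
    have := hub (insert u T) (by simp) hIind
    rw [Finset.sum_insert huT] at this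
    rw [hTsum, halpha]
    rw [hSsum] at this
    linarith
  linarith
end

section
/- Let G be a finite simple graph with positive real vertex weights ω, and let u, v be non-adjacent vertices of G such that N(u) ⊆ N(v). If ω(u) + ω(v) ≥ α_ω(G[N(v)]), then some maximum ω-weight independent set of G contains u, and α_ω(G) = α_ω(G − N[u]) + ω(u). -/
open scoped Classical

lemma sum_le_alphaOn {V : Type*} [Fintype V] (G : SimpleGraph V) (w : V → ℝ) (A : Set V)
    (S : Finset V) (hS : ↑S ⊆ A) (hind : IsIndepSet G S) :
    ∑ v ∈ S, w v ≤ alphaOn G w A := by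
  apply le_csSup
  · apply Set.Finite.bddAbove
    apply Set.Finite.subset (Set.finite_range (fun S : Finset V => ∑ v ∈ S, w v))
    rintro x ⟨S, -, -, rfl⟩; exact ⟨S, rfl⟩
  · exact ⟨S, hS, hind, rfl⟩

lemma alphaOn_attained {V : Type*} [Fintype V] (G : SimpleGraph V) (w : V → ℝ) (A : Set V) :
    ∃ S : Finset V, ↑S ⊆ A ∧ IsIndepSet G S ∧ alphaOn G w A = ∑ v ∈ S, w v := by
  have hne : {x : ℝ | ∃ S : Finset V, ↑S ⊆ A ∧ IsIndepSet G S ∧ x = ∑ v ∈ S, w v}.Nonempty :=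
    ⟨0, ∅, by simp [IsIndepSet]⟩
  have hfin : {x : ℝ | ∃ S : Finset V, ↑S ⊆ A ∧ IsIndepSet G S ∧ x = ∑ v ∈ S, w v}.Finite := by
    apply Set.Finite.subset (Set.finite_range (fun S : Finset V => ∑ v ∈ S, w v))
    rintro x ⟨S, -, -, rfl⟩; exact ⟨S, rfl⟩
  obtain ⟨S, h1, h2, h3⟩ := hne.csSup_mem hfin
  exact ⟨S, h1, h2, h3⟩

theorem stmt_9 {V : Type*} [Fintype V] (G : SimpleGraph V) (w : V → ℝ)
    (hw : ∀ x, 0 < w x) (u v : V) (hne : u ≠ v) (hnadj : ¬ G.Adj u v)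
    (hsub : G.neighborSet u ⊆ G.neighborSet v)
    (hwt : alphaOn G w (G.neighborSet v) ≤ w u + w v) :
    (∃ S : Finset V, IsMWIS G w S ∧ u ∈ S) ∧
      alpha G w = alphaOn G w (closedNbhd G u)ᶜ + w u := by
  obtain ⟨S, hSsub, hSind, hSeq⟩ := alphaOn_attained G w Set.univ
  have halpha : alpha G w = ∑ x ∈ S, w x := hSeq
  -- every independent set's weight is at most alpha
  have hle_alpha : ∀ T : Finset V, IsIndepSet G T → ∑ x ∈ T, w x ≤ alpha G w := fun T hT =>
    sum_le_alphaOn G w Set.univ T (by simp) hT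
  have hmain : ∃ S₀ : Finset V, IsMWIS G w S₀ ∧ u ∈ S₀ := by
    by_cases hu : u ∈ S
    · exact ⟨S, ⟨hSind, hSeq.symm⟩, hu⟩
    have hv : v ∉ S := by
      intro hv
      have hind' : IsIndepSet G (insert u S) := by
        intro a ha b hb hadj
        simp only [Finset.mem_insert] at ha hb
        rcases ha with rfl | ha <;> rcases hb with rfl | hb
        · exact G.irrefl hadj
        · exact hSind v hv b hb (hsub hadj)
        · exact hSind v hv a ha (hsub hadj.symm)
        · exact hSind a ha b hb hadj
      have h1 := hle_alpha _ hind'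
      rw [Finset.sum_insert hu] at h1
      have := hw u
      linarith [halpha ▸ h1]
    -- split S along the neighborhood of v
    set T : Finset V := S.filter (fun x => x ∈ G.neighborSet v) with hTdef
    set R : Finset V := S.filter (fun x => x ∉ G.neighborSet v) with hRdef
    have hsplit : ∑ x ∈ T, w x + ∑ x ∈ R, w x = ∑ x ∈ S, w x :=
      Finset.sum_filter_add_sum_filter_not S (fun x => x ∈ G.neighborSet v) w
    have hTle : ∑ x ∈ T, w x ≤ w u + w v := by
      refine le_trans (sum_le_alphaOn G w (G.neighborSet v) T ?_ ?_) hwt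
      · intro x hx
        have := Finset.mem_filter.mp (by exact_mod_cast hx)
        exact this.2
      · intro a ha b hb
        exact hSind a (Finset.mem_filter.mp ha).1 b (Finset.mem_filter.mp hb).1
    have hRmem : ∀ x ∈ R, x ∈ S ∧ x ∉ G.neighborSet v := by
      intro x hx
      exact Finset.mem_filter.mp hx
    have hvR : v ∉ R := fun h => hv (hRmem v h).1
    have huR : u ∉ insert v R := by
      simp only [Finset.mem_insert]
      rintro (rfl | h)
      · exact hne rfl
      · exact hu (hRmem u h).1
    have hind' : IsIndepSet G (insert u (insert v R)) := by
      intro a ha b hb hadj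
      simp only [Finset.mem_insert] at ha hb
      have key : ∀ x ∈ R, ¬ G.Adj u x ∧ ¬ G.Adj v x := by
        intro x hx
        obtain ⟨hxS, hxN⟩ := hRmem x hx
        exact ⟨fun h => hxN (hsub h), fun h => hxN h⟩
      rcases ha with rfl | rfl | ha <;> rcases hb with rfl | rfl | hb
      · exact G.irrefl hadj
      · exact hnadj hadj
      · exact (key b hb).1 hadj
      · exact hnadj hadj.symm
      · exact G.irrefl hadj
      · exact (key b hb).2 hadj
      · exact (key a ha).1 hadj.symm
      · exact (key a ha).2 hadj.symm
      · exact hSind a (hRmem a ha).1 b (hRmem b hb).1 hadj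
    have hsum' : ∑ x ∈ insert u (insert v R), w x = w u + (w v + ∑ x ∈ R, w x) := by
      rw [Finset.sum_insert huR, Finset.sum_insert hvR]
    have hge : alpha G w ≤ ∑ x ∈ insert u (insert v R), w x := by
      rw [hsum', halpha, ← hsplit]; linarith
    have hle := hle_alpha _ hind'
    exact ⟨insert u (insert v R), ⟨hind', le_antisymm hle hge⟩, Finset.mem_insert_self u _⟩
  refine ⟨hmain, ?_⟩
  obtain ⟨S₀, ⟨hind₀, hsum₀⟩, hu₀⟩ := hmain
  have herase : ↑(S₀.erase u) ⊆ (closedNbhd G u)ᶜ := by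
    intro x hx
    have hx' := Finset.mem_coe.mp hx
    have hxu : x ≠ u := Finset.ne_of_mem_erase hx'
    have hxS : x ∈ S₀ := Finset.mem_of_mem_erase hx'
    simp only [closedNbhd, Set.mem_compl_iff, Set.mem_insert_iff, SimpleGraph.mem_neighborSet]
    push_neg
    exact ⟨hxu, fun h => hind₀ u hu₀ x hxS h⟩
  have hle : alpha G w ≤ alphaOn G w (closedNbhd G u)ᶜ + w u := by
    have h1 : ∑ x ∈ S₀.erase u, w x + w u = ∑ x ∈ S₀, w x := Finset.sum_erase_add S₀ w hu₀
    have h2 : ∑ x ∈ S₀.erase u, w x ≤ alphaOn G w (closedNbhd G u)ᶜ :=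
      sum_le_alphaOn G w _ _ herase (fun a ha b hb =>
        hind₀ a (Finset.mem_of_mem_erase ha) b (Finset.mem_of_mem_erase hb))
    linarith [hsum₀ ▸ h1]
  have hge : alphaOn G w (closedNbhd G u)ᶜ + w u ≤ alpha G w := by
    obtain ⟨T, hTsub, hTind, hTeq⟩ := alphaOn_attained G w (closedNbhd G u)ᶜ
    have hTmem : ∀ x ∈ T, x ≠ u ∧ ¬ G.Adj u x := by
      intro x hx
      have := hTsub (Finset.mem_coe.mpr hx)
      simp only [closedNbhd, Set.mem_compl_iff, Set.mem_insert_iff,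
        SimpleGraph.mem_neighborSet] at this
      push_neg at this
      exact this
    have huT : u ∉ T := fun h => (hTmem u h).1 rfl
    have hind' : IsIndepSet G (insert u T) := by
      intro a ha b hb hadj
      simp only [Finset.mem_insert] at ha hb
      rcases ha with rfl | ha <;> rcases hb with rfl | hb
      · exact G.irrefl hadj
      · exact (hTmem b hb).2 hadj
      · exact (hTmem a ha).2 hadj.symm
      · exact hTind a ha b hb hadj
    have h1 := hle_alpha _ hind'
    rw [Finset.sum_insert huT] at h1
    rw [hTeq]; linarith
  linarith
end

section
/- Let G be a finite simple graph with positive real vertex weights ω, and let S be an independent set of G that is a heavy set, i.e., for every independent set C of the induced subgraph G[N(S)] it holds that ω(N(C) ∩ S) ≥ ω(C). Then for every independent set Ĩ of G, the set (Ĩ \ N(S)) ∪ S is an independent set of G with ω((Ĩ \ N(S)) ∪ S) ≥ ω(Ĩ). -/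
open scoped Classical

namespace IsIndepSet

variable {V : Type*} {G : SimpleGraph V}

theorem mono {S T : Finset V} (hS : IsIndepSet G S) (hTS : T ⊆ S) : IsIndepSet G T :=
  fun a ha b hb => hS a (hTS ha) b (hTS hb)

theorem notMem_setNbhd {I C : Finset V} (hI : IsIndepSet G I) (hCI : C ⊆ I) {x : V}
    (hx : x ∈ I) : x ∉ setNbhd G (↑C : Set V) := by
  rintro ⟨hxN, -⟩
  obtain ⟨c, hc, hcx⟩ := Set.mem_iUnion₂.1 hxN
  exact hI c (hCI hc) x hx hcx

theorem filter_notMem_setNbhd_union {I S : Finset V} (hI : IsIndepSet G I)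
    (hS : IsIndepSet G S) :
    IsIndepSet G (I.filter (fun x => x ∉ setNbhd G (↑S : Set V)) ∪ S) := by
  have cross : ∀ a ∈ I.filter (fun x => x ∉ setNbhd G (↑S : Set V)), ∀ b ∈ S, ¬ G.Adj a b := by
    intro a ha b hb hab
    obtain ⟨-, haN⟩ := Finset.mem_filter.1 ha
    by_cases haS : a ∈ S
    · exact hS a haS b hb hab
    · exact haN ⟨Set.mem_iUnion₂.2 ⟨b, hb, hab.symm⟩, haS⟩
  intro a ha b hb
  rcases Finset.mem_union.1 ha with ha | ha <;> rcases Finset.mem_union.1 hb with hb | hb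
  · exact hI a (Finset.mem_of_mem_filter a ha) b (Finset.mem_of_mem_filter b hb)
  · exact cross a ha b hb
  · exact fun hab => cross b hb a ha hab.symm
  · exact hS a ha b hb

end IsIndepSet

/-- The part `C = I ∩ N(S)` of `I` is charged to its neighbours `S ∩ N(C)`, which are disjoint
from the rest `I \ N(S)` of `I` because `I` is independent. -/
theorem sum_le_sum_filter_notMem_setNbhd_union {V : Type*} (G : SimpleGraph V) (w : V → ℝ)
    (hw : ∀ x, 0 ≤ w x) (S I : Finset V) (hI : IsIndepSet G I)
    (hheavy : ∑ x ∈ I.filter (fun x => x ∈ setNbhd G (↑S : Set V)), w x ≤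
      ∑ x ∈ S.filter (fun s => s ∈ setNbhd G
        (↑(I.filter (fun x => x ∈ setNbhd G (↑S : Set V))) : Set V)), w x) :
    ∑ x ∈ I, w x ≤ ∑ x ∈ I.filter (fun x => x ∉ setNbhd G (↑S : Set V)) ∪ S, w x := by
  set A := I.filter (fun x => x ∉ setNbhd G (↑S : Set V))
  set C := I.filter (fun x => x ∈ setNbhd G (↑S : Set V))
  set D := S.filter (fun s => s ∈ setNbhd G (↑C : Set V))
  have hAD : Disjoint A D := Finset.disjoint_left.2 fun a haA haD =>
    hI.notMem_setNbhd (Finset.filter_subset _ I) (Finset.mem_of_mem_filter a haA)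
      (Finset.mem_filter.1 haD).2
  calc ∑ x ∈ I, w x = ∑ x ∈ C, w x + ∑ x ∈ A, w x :=
        (Finset.sum_filter_add_sum_filter_not I _ w).symm
    _ ≤ ∑ x ∈ D, w x + ∑ x ∈ A, w x := by gcongr
    _ = ∑ x ∈ A ∪ D, w x := by rw [Finset.sum_union hAD, add_comm]
    _ ≤ ∑ x ∈ A ∪ S, w x :=
        Finset.sum_le_sum_of_subset_of_nonneg
          (Finset.union_subset_union_right (Finset.filter_subset _ S)) fun x _ _ => hw x

theorem stmt_12_general {V : Type*} (G : SimpleGraph V) (w : V → ℝ)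
    (hw : ∀ x, 0 < w x) (S : Finset V) (hSind : IsIndepSet G S)
    (hheavy : ∀ C : Finset V, ↑C ⊆ setNbhd G (↑S : Set V) → IsIndepSet G C →
      ∑ x ∈ C, w x ≤ ∑ x ∈ S.filter (fun s => s ∈ setNbhd G (↑C : Set V)), w x) :
    ∀ I : Finset V, IsIndepSet G I →
      IsIndepSet G ((I.filter (fun x => x ∉ setNbhd G (↑S : Set V))) ∪ S) ∧
        ∑ x ∈ I, w x ≤
          ∑ x ∈ (I.filter (fun x => x ∉ setNbhd G (↑S : Set V))) ∪ S, w x := by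
  intro I hI
  refine ⟨hI.filter_notMem_setNbhd_union hSind, ?_⟩
  exact sum_le_sum_filter_notMem_setNbhd_union G w (fun x => (hw x).le) S I hI
    (hheavy _ (fun x hx => (Finset.mem_filter.1 hx).2) (hI.mono (Finset.filter_subset _ I)))

theorem stmt_12 {V : Type*} [Fintype V] (G : SimpleGraph V) (w : V → ℝ)
    (hw : ∀ x, 0 < w x) (S : Finset V) (hSind : IsIndepSet G S)
    (hheavy : ∀ C : Finset V, ↑C ⊆ setNbhd G (↑S : Set V) → IsIndepSet G C →
      ∑ x ∈ C, w x ≤ ∑ x ∈ S.filter (fun s => s ∈ setNbhd G (↑C : Set V)), w x) :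
    ∀ I : Finset V, IsIndepSet G I →
      IsIndepSet G ((I.filter (fun x => x ∉ setNbhd G (↑S : Set V))) ∪ S) ∧
        ∑ x ∈ I, w x ≤
          ∑ x ∈ (I.filter (fun x => x ∉ setNbhd G (↑S : Set V))) ∪ S, w x :=
  stmt_12_general G w hw S hSind hheavy
end
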